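/- Let J: ℝⁿ → ℝ be β-strongly convex with minimizer U*, let Σ ≻ 0, λ > 0, U_in ∈ ℝⁿ, and define J'(U) = J(U) − λ U_inᵀ Σ^{-1} U + (λ/2) Uᵀ Σ^{-1} U. If U*' minimizes J', then ‖U*' − U*‖ ≤ 2λ ‖Σ^{-1}‖ ‖U_in − U*‖ / (β + λ/‖Σ‖). -/

import Mathlib

open Matrix
open scoped RealInnerProductSpace

noncomputable def opNorm {n : ℕ} (M : Matrix (Fin n) (Fin n) ℝ) : ℝ :=
  ‖(Matrix.toEuclideanLin M).toContinuousLinearMap‖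

/-- Apply a matrix to a vector of `EuclideanSpace`. -/
noncomputable def mApp {n : ℕ} (M : Matrix (Fin n) (Fin n) ℝ) (v : EuclideanSpace ℝ (Fin n)) :
    EuclideanSpace ℝ (Fin n) :=
  (WithLp.equiv 2 (Fin n → ℝ)).symm (M.mulVec (WithLp.equiv 2 (Fin n → ℝ) v))

namespace Stmt8Aux

variable {n : ℕ}

lemma mApp_eq_clm (M : Matrix (Fin n) (Fin n) ℝ) (v : EuclideanSpace ℝ (Fin n)) :
    mApp M v = (Matrix.toEuclideanLin M).toContinuousLinearMap v := rfl

lemma norm_mApp_le (M : Matrix (Fin n) (Fin n) ℝ) (v : EuclideanSpace ℝ (Fin n)) :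
    ‖mApp M v‖ ≤ opNorm M * ‖v‖ := by
  rw [mApp_eq_clm]
  exact (Matrix.toEuclideanLin M).toContinuousLinearMap.le_opNorm v

lemma mApp_add (M : Matrix (Fin n) (Fin n) ℝ) (u v : EuclideanSpace ℝ (Fin n)) :
    mApp M (u + v) = mApp M u + mApp M v := by
  simp only [mApp_eq_clm, map_add]

lemma mApp_smul (M : Matrix (Fin n) (Fin n) ℝ) (t : ℝ) (v : EuclideanSpace ℝ (Fin n)) :
    mApp M (t • v) = t • mApp M v := by
  rw [mApp_eq_clm, mApp_eq_clm]
  exact (Matrix.toEuclideanLin M).toContinuousLinearMap.map_smul t v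

lemma inner_mApp_symm {M : Matrix (Fin n) (Fin n) ℝ} (hM : Mᵀ = M)
    (u v : EuclideanSpace ℝ (Fin n)) : ⟪u, mApp M v⟫ = ⟪v, mApp M u⟫ := by
  simp only [mApp, EuclideanSpace.inner_eq_star_dotProduct, Equiv.apply_symm_apply,
    star_trivial]
  change (M *ᵥ v.ofLp) ⬝ᵥ u.ofLp = (M *ᵥ u.ofLp) ⬝ᵥ v.ofLp
  rw [dotProduct_comm, Matrix.dotProduct_mulVec, ← Matrix.mulVec_transpose, hM]

lemma posPart {S : Matrix (Fin n) (Fin n) ℝ} (hS : S.PosDef)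
    (x : EuclideanSpace ℝ (Fin n)) : 0 ≤ ⟪x, mApp S x⟫ := by
  have h := hS.posSemidef.dotProduct_mulVec_nonneg (WithLp.equiv 2 (Fin n → ℝ) x)
  rw [EuclideanSpace.inner_eq_star_dotProduct, dotProduct_comm]
  simpa [mApp] using h

lemma transpose_eq {S : Matrix (Fin n) (Fin n) ℝ} (hS : S.PosDef) : Sᵀ = S := by
  have := hS.isHermitian
  rwa [Matrix.IsHermitian, Matrix.conjTranspose_eq_transpose_of_trivial] at this

lemma cs {S : Matrix (Fin n) (Fin n) ℝ} (hS : S.PosDef)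
    (x y : EuclideanSpace ℝ (Fin n)) :
    ⟪x, mApp S y⟫ ^ 2 ≤ ⟪x, mApp S x⟫ * ⟪y, mApp S y⟫ := by
  have hM := transpose_eq hS
  have key : ∀ t : ℝ,
      0 ≤ ⟪y, mApp S y⟫ * (t * t) + (2 * ⟪x, mApp S y⟫) * t + ⟪x, mApp S x⟫ := by
    intro t
    have h0 := posPart hS (x + t • y)
    rw [mApp_add, mApp_smul] at h0
    simp only [inner_add_left, inner_add_right, real_inner_smul_left,
      real_inner_smul_right] at h0
    have hsym : ⟪y, mApp S x⟫ = ⟪x, mApp S y⟫ := inner_mApp_symm hM y x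
    rw [hsym] at h0
    nlinarith [h0]
  have hd := discrim_le_zero key
  rw [discrim] at hd
  nlinarith [hd]

lemma quad_lower {S : Matrix (Fin n) (Fin n) ℝ} (hS : S.PosDef)
    (d : EuclideanSpace ℝ (Fin n)) :
    ‖d‖ ^ 2 / opNorm S ≤ ⟪d, mApp S⁻¹ d⟫ := by
  rcases eq_or_ne d 0 with rfl | hd
  · simp [mApp]
  · have hdet : IsUnit S.det := hS.det_pos.ne'.isUnit
    set w := mApp S⁻¹ d with hw
    have hSw : mApp S w = d := by
      simp only [hw, mApp, Equiv.apply_symm_apply, Matrix.mulVec_mulVec,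
        Matrix.mul_nonsing_inv S hdet, Matrix.one_mulVec]
      exact (WithLp.equiv 2 (Fin n → ℝ)).symm_apply_apply d
    have hdn : (0:ℝ) < ‖d‖ := norm_pos_iff.mpr hd
    have h1 : ⟪d, mApp S w⟫ = ‖d‖ ^ 2 := by
      rw [hSw, real_inner_self_eq_norm_sq]
    have hcs := cs hS d w
    have hSd : ⟪d, mApp S d⟫ ≤ ‖d‖ * (opNorm S * ‖d‖) :=
      (real_inner_le_norm d (mApp S d)).trans
        (mul_le_mul_of_nonneg_left (norm_mApp_le S d) (norm_nonneg d))
    have hwSw : ⟪w, mApp S w⟫ = ⟪d, w⟫ := by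
      rw [hSw, real_inner_comm]
    -- positivity of opNorm S
    have hop : 0 < opNorm S := by
      by_contra hle
      push_neg at hle
      have h2 : ‖d‖ ^ 2 ≤ ‖d‖ * (opNorm S * ‖w‖) := by
        rw [← h1]
        exact (real_inner_le_norm d (mApp S w)).trans
          (mul_le_mul_of_nonneg_left (norm_mApp_le S w) (norm_nonneg d))
      have h3 : ‖d‖ * (opNorm S * ‖w‖) ≤ 0 :=
        mul_nonpos_of_nonneg_of_nonpos (norm_nonneg d)
          (mul_nonpos_of_nonpos_of_nonneg hle (norm_nonneg w))
      nlinarith [pow_pos hdn 2]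
    rw [div_le_iff₀ hop]
    have hq2 : 0 ≤ ⟪d, w⟫ := hwSw ▸ posPart hS w
    have hA : ‖d‖ ^ 2 * ‖d‖ ^ 2 ≤ ‖d‖ * (opNorm S * ‖d‖) * ⟪d, w⟫ := by
      rw [h1, hwSw] at hcs
      have := mul_le_mul_of_nonneg_right hSd hq2
      nlinarith [hcs]
    nlinarith [hA, pow_pos hdn 2]

end Stmt8Aux

open Stmt8Aux in
theorem stmt8 {n : ℕ} (J J' : EuclideanSpace ℝ (Fin n) → ℝ)
    (β lam : ℝ) (hβ : 0 < β) (hlam : 0 < lam)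
    (S : Matrix (Fin n) (Fin n) ℝ) (hS : S.PosDef)
    (Uin Ustar Ustar' : EuclideanSpace ℝ (Fin n))
    (hconv : ∀ U V, J V ≥ J U + ⟪gradient J U, V - U⟫ + β / 2 * ‖V - U‖ ^ 2)
    (hmin : ∀ U, J Ustar ≤ J U)
    (hJ' : ∀ U, J' U = J U - lam * ⟪Uin, mApp S⁻¹ U⟫ + lam / 2 * ⟪U, mApp S⁻¹ U⟫)
    (hmin' : ∀ U, J' Ustar' ≤ J' U) :
    ‖Ustar' - Ustar‖ ≤
      2 * lam * opNorm S⁻¹ * ‖Uin - Ustar‖ / (β + lam / opNorm S) := by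
  have hSinv : (S⁻¹).PosDef := hS.inv
  have hMt : (S⁻¹)ᵀ = S⁻¹ := transpose_eq hSinv
  set d : EuclideanSpace ℝ (Fin n) := Ustar' - Ustar with hd
  have hU' : Ustar' = Ustar + d := by rw [hd]; abel
  -- gradient of J vanishes at the minimizer
  have hg : gradient J Ustar = 0 := by
    by_cases hdiff : DifferentiableAt ℝ J Ustar
    · have hloc : IsLocalMin J Ustar := Filter.Eventually.of_forall fun x => hmin x
      rw [gradient, hloc.fderiv_eq_zero, map_zero]
    · exact gradient_eq_zero_of_not_differentiableAt hdiff
  have hJd : J Ustar + β / 2 * ‖d‖ ^ 2 ≤ J Ustar' := by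
    have h := hconv Ustar Ustar'
    rw [hg, inner_zero_left] at h
    rw [hd]; linarith
  have hmm : J' Ustar' ≤ J' Ustar := hmin' Ustar
  rw [hJ' Ustar', hJ' Ustar] at hmm
  -- expand the quadratic terms
  have e1 : ⟪Uin, mApp S⁻¹ Ustar'⟫ = ⟪Uin, mApp S⁻¹ Ustar⟫ + ⟪Uin, mApp S⁻¹ d⟫ := by
    rw [hU', mApp_add, inner_add_right]
  have e2 : ⟪Ustar', mApp S⁻¹ Ustar'⟫ =
      ⟪Ustar, mApp S⁻¹ Ustar⟫ + 2 * ⟪Ustar, mApp S⁻¹ d⟫ + ⟪d, mApp S⁻¹ d⟫ := by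
    rw [hU', mApp_add]
    simp only [inner_add_left, inner_add_right]
    have hsym : ⟪d, mApp S⁻¹ Ustar⟫ = ⟪Ustar, mApp S⁻¹ d⟫ := inner_mApp_symm hMt d Ustar
    linarith
  have e3 : lam * ⟪Uin - Ustar, mApp S⁻¹ d⟫ =
      lam * ⟪Uin, mApp S⁻¹ d⟫ - lam * ⟪Ustar, mApp S⁻¹ d⟫ := by
    rw [inner_sub_left]; ring
  have key : β / 2 * ‖d‖ ^ 2 + lam / 2 * ⟪d, mApp S⁻¹ d⟫ ≤
      lam * ⟪Uin - Ustar, mApp S⁻¹ d⟫ := by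
    rw [e1, e2] at hmm
    rw [e3]
    nlinarith [hmm, hJd]
  have hQ : ‖d‖ ^ 2 / opNorm S ≤ ⟪d, mApp S⁻¹ d⟫ := quad_lower hS d
  have hR : ⟪Uin - Ustar, mApp S⁻¹ d⟫ ≤ ‖Uin - Ustar‖ * (opNorm S⁻¹ * ‖d‖) :=
    (real_inner_le_norm _ _).trans
      (mul_le_mul_of_nonneg_left (norm_mApp_le _ _) (norm_nonneg _))
  have hNS : 0 ≤ opNorm S := norm_nonneg _
  have hN : 0 ≤ opNorm S⁻¹ := norm_nonneg _
  have htn : 0 ≤ lam / opNorm S := div_nonneg hlam.le hNS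
  have hD : 0 < β + lam / opNorm S := by linarith
  rw [le_div_iff₀ hD]
  have key2 : β / 2 * ‖d‖ ^ 2 + (lam / opNorm S) / 2 * ‖d‖ ^ 2 ≤
      lam * (‖Uin - Ustar‖ * (opNorm S⁻¹ * ‖d‖)) := by
    have h1 : lam / 2 * (‖d‖ ^ 2 / opNorm S) ≤ lam / 2 * ⟪d, mApp S⁻¹ d⟫ :=
      mul_le_mul_of_nonneg_left hQ (by linarith)
    have h2 : lam * ⟪Uin - Ustar, mApp S⁻¹ d⟫ ≤
        lam * (‖Uin - Ustar‖ * (opNorm S⁻¹ * ‖d‖)) :=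
      mul_le_mul_of_nonneg_left hR hlam.le
    have h3 : (lam / opNorm S) / 2 * ‖d‖ ^ 2 = lam / 2 * (‖d‖ ^ 2 / opNorm S) := by
      ring
    linarith
  rcases eq_or_lt_of_le (norm_nonneg d) with h0 | hpos
  · rw [← h0]
    have : 0 ≤ 2 * lam * opNorm S⁻¹ * ‖Uin - Ustar‖ := by positivity
    linarith
  · have h4 : ‖d‖ * (β + lam / opNorm S) * ‖d‖ ≤
        2 * lam * opNorm S⁻¹ * ‖Uin - Ustar‖ * ‖d‖ := by nlinarith [key2]
    exact le_of_mul_le_mul_right h4 hpos
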